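/- arXiv:2411.15906 — 3 statements merged into one kernel-verified Lean document; each statement's English description precedes it below -/
import Mathlib

section
/- Let x_n be a sequence of real numbers satisfying the recurrence x_{n+1} = x_n * x_{n-1} - x_{n-2}. If there exists N such that |x_N| > 2, |x_{N+1}| ≥ |x_N|, and |x_{N+2}| ≥ |x_{N+1}|, then |x_{n+1}| > |x_n| for all n ≥ N+2, and in particular |x_n| > 2 for all n ≥ N. -/
lemma trace_key (a b c : ℝ) (h1 : |a| > 2) (h2 : |b| ≥ |a|) (h3 : |c| ≥ |b|) :
    |c * b - a| > |c| := by
  have hb : |b| > 2 := lt_of_lt_of_le h1 h2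
  have hc : |c| > 2 := lt_of_lt_of_le hb h3
  have h := abs_sub_abs_le_abs_sub (c * b) a
  rw [abs_mul] at h
  nlinarith [abs_nonneg a]

/-- **Super band gap criterion (Davies–Morini).**
If `x` satisfies the Fibonacci trace-map recursion `x (n+3) = x (n+2) * x (n+1) - x n`
and `|x N| > 2`, `|x (N+1)| ≥ |x N|`, `|x (N+2)| ≥ |x (N+1)|`, then the sequence of
absolute values is strictly increasing from index `N+2` on, and `|x n| > 2` for all
`n ≥ N`. -/
theorem trace_map_escape
    (x : ℕ → ℝ)
    (hrec : ∀ n, x (n + 3) = x (n + 2) * x (n + 1) - x n)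
    (N : ℕ)
    (h1 : |x N| > 2)
    (h2 : |x (N + 1)| ≥ |x N|)
    (h3 : |x (N + 2)| ≥ |x (N + 1)|) :
    (∀ n, N + 2 ≤ n → |x (n + 1)| > |x n|) ∧ (∀ n, N ≤ n → |x n| > 2) := by
  have Q : ∀ k, |x (N + k)| > 2 ∧ |x (N + k + 1)| ≥ |x (N + k)| ∧
      |x (N + k + 2)| ≥ |x (N + k + 1)| := by
    intro k
    induction k with
    | zero => exact ⟨h1, h2, h3⟩
    | succ k ih =>
      obtain ⟨a, b, c⟩ := ih
      have hs : |x (N + k + 3)| > |x (N + k + 2)| := by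
        rw [hrec (N + k)]
        exact trace_key _ _ _ a b c
      have e1 : N + (k + 1) = N + k + 1 := by omega
      rw [e1]
      exact ⟨lt_of_lt_of_le a b, c, le_of_lt hs⟩
  constructor
  · intro n hn
    obtain ⟨k, rfl⟩ : ∃ k, n = N + k + 2 := ⟨n - N - 2, by omega⟩
    obtain ⟨a, b, c⟩ := Q k
    have : N + k + 2 + 1 = N + k + 3 := by omega
    rw [this, hrec (N + k)]
    exact trace_key _ _ _ a b c
  · intro n hn
    obtain ⟨k, rfl⟩ : ∃ k, n = N + k := ⟨n - N, by omega⟩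
    exact (Q k).1
end

section
/- Let x_n be a real sequence satisfying x_{n+1} = x_n * x_{n-1} - x_{n-2}. Suppose there exist n and ε > 0 such that |x_{n+1}| > 2 + ε, |x_{n+2}| > 2 + ε, and |x_n| ≤ |x_{n+2}|. Then |x_{k+1}| ≥ (1+ε)|x_k| for all k ≥ n+2, and consequently |x_k| > 2 for all k ≥ n+1. -/
/-- **Refined super band gap criterion for piecewise-constant tiles.**
If `x` satisfies the Fibonacci trace-map recursion and for some `n` and `ε > 0`
we have `|x (n+1)| > 2 + ε`, `|x (n+2)| > 2 + ε` and `|x n| ≤ |x (n+2)|`, then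
`|x (k+1)| ≥ (1+ε) |x k|` for all `k ≥ n+2`, and `|x k| > 2` for all `k ≥ n+1`. -/
theorem trace_map_escape_refined
    (x : ℕ → ℝ)
    (hrec : ∀ m, x (m + 3) = x (m + 2) * x (m + 1) - x m)
    (n : ℕ) (ε : ℝ) (hε : 0 < ε)
    (h1 : |x (n + 1)| > 2 + ε)
    (h2 : |x (n + 2)| > 2 + ε)
    (h3 : |x n| ≤ |x (n + 2)|) :
    (∀ k, n + 2 ≤ k → (1 + ε) * |x k| ≤ |x (k + 1)|) ∧
    (∀ k, n + 1 ≤ k → |x k| > 2) := by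
  have key : ∀ m : ℕ, |x (n + 1 + m)| > 2 + ε ∧ |x (n + 2 + m)| > 2 + ε ∧
      |x (n + m)| ≤ |x (n + 2 + m)| := by
    intro m
    induction m with
    | zero => exact ⟨h1, h2, h3⟩
    | succ m ih =>
      obtain ⟨ha, hb, hc⟩ := ih
      have hr := hrec (n + m)
      have habs : |x (n + 2 + m)| * |x (n + 1 + m)| - |x (n + m)| ≤ |x (n + m + 3)| := by
        rw [hr]
        calc |x (n + 2 + m)| * |x (n + 1 + m)| - |x (n + m)|
            = |x (n + m + 2) * x (n + m + 1)| - |x (n + m)| := by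
              rw [abs_mul]; ring_nf
          _ ≤ |x (n + m + 2) * x (n + m + 1) - x (n + m)| := abs_sub_abs_le_abs_sub _ _
      have e1 : n + 1 + (m + 1) = n + 2 + m := by ring
      have e2 : n + 2 + (m + 1) = n + m + 3 := by ring
      have e3 : n + (m + 1) = n + 1 + m := by ring
      rw [e1, e2, e3]
      have hb0 : (0:ℝ) ≤ |x (n + 2 + m)| := abs_nonneg _
      refine ⟨hb, ?_, ?_⟩
      · nlinarith [abs_nonneg (x (n + m)), abs_nonneg (x (n + 1 + m))]
      · nlinarith [abs_nonneg (x (n + m)), abs_nonneg (x (n + 1 + m))]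
  constructor
  · intro k hk
    obtain ⟨m, rfl⟩ := Nat.exists_eq_add_of_le hk
    obtain ⟨ha, hb, hc⟩ := key m
    have hr := hrec (n + m)
    have habs : |x (n + 2 + m)| * |x (n + 1 + m)| - |x (n + m)| ≤ |x (n + m + 3)| := by
      rw [hr]
      calc |x (n + 2 + m)| * |x (n + 1 + m)| - |x (n + m)|
          = |x (n + m + 2) * x (n + m + 1)| - |x (n + m)| := by
            rw [abs_mul]; ring_nf
        _ ≤ |x (n + m + 2) * x (n + m + 1) - x (n + m)| := abs_sub_abs_le_abs_sub _ _
    have e2 : n + 2 + m + 1 = n + m + 3 := by ring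
    rw [e2]
    nlinarith [abs_nonneg (x (n + 2 + m))]
  · intro k hk
    obtain ⟨m, rfl⟩ := Nat.exists_eq_add_of_le hk
    have := (key m).1
    linarith
end

section
/- Let C > 0 and let (q_n) be an increasing sequence of positive integers with q_{n+1} ≥ q_n + q_{n-1} (so q_n grows at least like the Fibonacci numbers). Let (d_n) be a nonnegative sequence with d_n → 0 satisfying the recursion d_{n-1} ≤ C(1 + M + d_n) q_n^{-1} + d_n for some M ≥ 0. Then d_n ≤ C(1 + M) Σ_{k=n}^∞ q_k^{-1} Π_{l=n}^{k-1} (1 + C q_l^{-1}), and this bound is finite. -/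
/-!
Since `q` is increasing, the recursion weakens to
`d n ≤ C (1 + M) / q n + (1 + C / q n) d (n + 1)`. Unrolling it `m` times bounds `d n` by the
`m`-th partial sum of the series plus the remainder `∏_{l<m} (1 + C / q (n + l)) · d (n + m)`;
the product stays below `exp (C Σ 1 / q)`, so the remainder tends to `0` with `d`.
The series converges because `q (n + 2) ≥ 2 q n`, so `1 / q` decays geometrically along the even
and along the odd indices.
-/

open Filter Finset Topology

theorem summable_inv_of_two_mul_le {a : ℕ → ℝ} (ha : ∀ n, 0 < a n)
    (h2 : ∀ n, 2 * a n ≤ a (n + 2)) : Summable fun n => (a n)⁻¹ := by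
  have hgrow : ∀ i k, 2 ^ k * a i ≤ a (2 * k + i) := by
    intro i k
    induction k with
    | zero => simp
    | succ k ih =>
      calc 2 ^ (k + 1) * a i = 2 * (2 ^ k * a i) := by ring
        _ ≤ 2 * a (2 * k + i) := by linarith
        _ ≤ a (2 * (k + 1) + i) := by
          rw [show 2 * (k + 1) + i = 2 * k + i + 2 by ring]
          exact h2 _
  have hgeom : ∀ i, Summable fun k => (a (2 * k + i))⁻¹ := fun i =>
    (summable_geometric_two.mul_left (a i)⁻¹).of_nonneg_of_le (fun k => (inv_pos.2 (ha _)).le)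
      fun k => by
        calc (a (2 * k + i))⁻¹
            ≤ (2 ^ k * a i)⁻¹ := inv_anti₀ (mul_pos (by positivity) (ha i)) (hgrow i k)
          _ = (a i)⁻¹ * (1 / 2) ^ k := by rw [mul_inv, one_div_pow, one_div, mul_comm]
  exact .even_add_odd (by simpa using hgeom 0) (hgeom 1)

theorem le_sum_mul_prod_add_prod_mul {a r d : ℕ → ℝ} (hr : ∀ k, 0 ≤ r k)
    (h : ∀ k, d k ≤ a k + r k * d (k + 1)) (m : ℕ) :
    d 0 ≤ ∑ k ∈ range m, a k * ∏ l ∈ range k, r l + (∏ l ∈ range m, r l) * d m := by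
  induction m with
  | zero => simp
  | succ m ih =>
    have hP : 0 ≤ ∏ l ∈ range m, r l := prod_nonneg fun l _ => hr l
    calc d 0
      _ ≤ ∑ k ∈ range m, a k * ∏ l ∈ range k, r l + (∏ l ∈ range m, r l) * d m := ih
      _ ≤ ∑ k ∈ range m, a k * ∏ l ∈ range k, r l
            + (∏ l ∈ range m, r l) * (a m + r m * d (m + 1)) := by gcongr; exact h m
      _ = _ := by rw [sum_range_succ, prod_range_succ]; ring

theorem le_tsum_mul_prod_of_le_add_mul {a r d : ℕ → ℝ} (hr : ∀ k, 0 ≤ r k)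
    (h : ∀ k, d k ≤ a k + r k * d (k + 1))
    (hs : Summable fun k => a k * ∏ l ∈ range k, r l)
    (hd : Tendsto (fun m => (∏ l ∈ range m, r l) * d m) atTop (𝓝 0)) :
    d 0 ≤ ∑' k, a k * ∏ l ∈ range k, r l :=
  ge_of_tendsto' (by simpa using hs.hasSum.tendsto_sum_nat.add hd)
    (le_sum_mul_prod_add_prod_mul hr h)

theorem prod_one_add_mul_le_exp_tsum {ι : Type*} {x : ι → ℝ} (hx : ∀ i, 0 ≤ x i)
    (hxs : Summable x) {c : ℝ} (hc : 0 ≤ c) (s : Finset ι) :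
    ∏ i ∈ s, (1 + c * x i) ≤ Real.exp (c * ∑' i, x i) :=
  calc ∏ i ∈ s, (1 + c * x i) ≤ Real.exp (∑ i ∈ s, c * x i) :=
        Real.prod_one_add_le_exp_sum s fun i => mul_nonneg hc (hx i)
    _ ≤ Real.exp (c * ∑' i, x i) := by
        rw [← mul_sum]; gcongr; exact hxs.sum_le_tsum s fun i _ => hx i

section OneAddMul

variable {x : ℕ → ℝ} {c : ℝ}

theorem summable_mul_prod_one_add_mul (hx : ∀ k, 0 ≤ x k) (hxs : Summable x) (hc : 0 ≤ c) :
    Summable fun k => x k * ∏ l ∈ range k, (1 + c * x l) :=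
  (hxs.mul_right (Real.exp (c * ∑' l, x l))).of_nonneg_of_le
    (fun k => mul_nonneg (hx k) (prod_nonneg fun l _ => by nlinarith [hx l]))
    fun k => mul_le_mul_of_nonneg_left (prod_one_add_mul_le_exp_tsum hx hxs hc _) (hx k)

theorem le_mul_tsum_mul_prod_one_add_mul {d : ℕ → ℝ} {b : ℝ} (hx : ∀ k, 0 ≤ x k)
    (hxs : Summable x) (hc : 0 ≤ c) (hd : Tendsto d atTop (𝓝 0))
    (h : ∀ k, d k ≤ b * x k + (1 + c * x k) * d (k + 1)) :
    d 0 ≤ b * ∑' k, x k * ∏ l ∈ range k, (1 + c * x l) := by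
  have hr : ∀ k, 0 ≤ 1 + c * x k := fun k => by nlinarith [hx k]
  have hprod_d : Tendsto (fun m => (∏ l ∈ range m, (1 + c * x l)) * d m) atTop (𝓝 0) := by
    refine squeeze_zero_norm (fun m => ?_)
      (by simpa using hd.norm.const_mul (Real.exp (c * ∑' l, x l)))
    rw [norm_mul, Real.norm_of_nonneg (prod_nonneg fun l _ => hr l)]
    exact mul_le_mul_of_nonneg_right (prod_one_add_mul_le_exp_tsum hx hxs hc _) (norm_nonneg _)
  simpa only [mul_assoc, tsum_mul_left] using
    le_tsum_mul_prod_of_le_add_mul hr h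
      (by simpa only [mul_assoc] using (summable_mul_prod_one_add_mul hx hxs hc).mul_left b)
      hprod_d

end OneAddMul

/-- **Recursive distance bound.** Let `C > 0`, `(q n)` an increasing sequence of
positive integers with `q (n+2) ≥ q (n+1) + q n` (Fibonacci-like growth), and
`(d n)` a nonnegative null sequence satisfying
`d (n-1) ≤ C (1 + M + d n) / q n + d n` for some `M ≥ 0`. Then
`d n ≤ C (1+M) Σ_{k=n}^∞ q_k⁻¹ Π_{l=n}^{k-1} (1 + C q_l⁻¹)` and the bound is
finite (the series is summable). -/
theorem recursive_distance_bound
    (C M : ℝ) (hC : 0 < C) (hM : 0 ≤ M)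
    (q : ℕ → ℕ) (hq_pos : ∀ n, 0 < q n) (hq_mono : StrictMono q)
    (hq_fib : ∀ n, q (n + 1) + q n ≤ q (n + 2))
    (d : ℕ → ℝ) (hd_nonneg : ∀ n, 0 ≤ d n)
    (hd_lim : Tendsto d atTop (nhds 0))
    (hd_rec : ∀ n, d n ≤ C * (1 + M + d (n + 1)) * ((q (n + 1) : ℝ))⁻¹ + d (n + 1)) :
    ∀ n : ℕ,
      Summable (fun k : ℕ =>
        ((q (n + k) : ℝ))⁻¹ * ∏ l ∈ range k, (1 + C * ((q (n + l) : ℝ))⁻¹)) ∧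
      d n ≤ C * (1 + M) *
        ∑' k : ℕ,
          ((q (n + k) : ℝ))⁻¹ * ∏ l ∈ range k, (1 + C * ((q (n + l) : ℝ))⁻¹) := by
  have hqR : ∀ m, (0 : ℝ) < q m := fun m => by exact_mod_cast hq_pos m
  have hsum : Summable fun m => ((q m : ℝ))⁻¹ := summable_inv_of_two_mul_le hqR fun m => by
    have := hq_mono.monotone (Nat.le_succ m)
    exact_mod_cast (by linarith [hq_fib m] : 2 * q m ≤ q (m + 2))
  intro n
  set x : ℕ → ℝ := fun k => ((q (n + k) : ℝ))⁻¹
  have hx : ∀ k, 0 ≤ x k := fun k => (inv_pos.2 (hqR _)).le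
  have hxs : Summable x := by simpa only [add_comm] using (summable_nat_add_iff n).2 hsum
  refine ⟨summable_mul_prod_one_add_mul hx hxs hC.le,
    le_mul_tsum_mul_prod_one_add_mul (d := fun k => d (n + k)) hx hxs hC.le ?_ fun k => ?_⟩
  · simpa only [add_comm] using (tendsto_add_atTop_iff_nat n).2 hd_lim
  · have hx_anti : ((q (n + k + 1) : ℝ))⁻¹ ≤ x k :=
      inv_anti₀ (hqR _) (by exact_mod_cast hq_mono.monotone (Nat.le_succ _))
    have hd_next := hd_nonneg (n + k + 1)
    calc d (n + k) ≤ C * (1 + M + d (n + k + 1)) * ((q (n + k + 1) : ℝ))⁻¹ + d (n + k + 1) :=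
          hd_rec _
      _ ≤ C * (1 + M + d (n + k + 1)) * x k + d (n + k + 1) := by gcongr
      _ = C * (1 + M) * x k + (1 + C * x k) * d (n + (k + 1)) := by rw [← add_assoc]; ring
end
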